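/- arXiv:2503.15967 — 2 statements merged into one kernel-verified Lean document; each statement's English description precedes it below -/
import Mathlib

section
/- Efficiency gain of the integrative estimator (deterministic core of Theorem 5, uncensored case): the matrix V_int − V_rct equals E[(1−S)·X₁X₁ᵀ] − B₁₂·B₂₂⁻¹·B₁₂ᵀ and is positive semidefinite; consequently V_int is positive definite and for every q ∈ ℝ^{d₁}, qᵀ·V_int⁻¹·q ≤ qᵀ·V_rct⁻¹·q, i.e., the asymptotic variance of the integrative estimator is no larger than that of the RCT-only estimator. -/
open MeasureTheory Matrix

section Aux

variable {Ω : Type*} [MeasurableSpace Ω] {P : Measure Ω} [IsProbabilityMeasure P]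

/-- Product of a bounded measurable function with two L² functions is integrable. -/
lemma aux_integrable (g : Ω → ℝ) (hg : Measurable g) (hgb : ∀ ω, |g ω| ≤ 1)
    (f₁ f₂ : Ω → ℝ) (hm₁ : Measurable f₁) (hm₂ : Measurable f₂)
    (h₁ : MemLp f₁ 2 P) (h₂ : MemLp f₂ 2 P) :
    Integrable (fun ω => g ω * f₁ ω * f₂ ω) P := by
  have hbd : Integrable (fun ω => (f₁ ω ^ 2 + f₂ ω ^ 2) / 2) P :=
    (h₁.integrable_sq.add h₂.integrable_sq).div_const 2
  refine hbd.mono' ((hg.mul hm₁).mul hm₂).aestronglyMeasurable ?_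
  filter_upwards with ω
  have h1 := hgb ω
  have h2 : |g ω * f₁ ω * f₂ ω| = |g ω| * |f₁ ω| * |f₂ ω| := by
    rw [abs_mul, abs_mul]
  have h3 : 0 ≤ |f₁ ω| := abs_nonneg _
  have h4 : 0 ≤ |f₂ ω| := abs_nonneg _
  have h5 : 0 ≤ |g ω| := abs_nonneg _
  have h6 : |f₁ ω| ^ 2 = f₁ ω ^ 2 := sq_abs _
  have h7 : |f₂ ω| ^ 2 = f₂ ω ^ 2 := sq_abs _
  simp only [Real.norm_eq_abs]
  nlinarith [sq_nonneg (|f₁ ω| - |f₂ ω|), mul_nonneg h3 h4]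

/-- A matrix of weighted second moments with nonnegative weight is positive semidefinite. -/
lemma aux_psd {ι : Type*} [Fintype ι] (g : Ω → ℝ) (Z : Ω → ι → ℝ)
    (hg : ∀ ω, 0 ≤ g ω) (M : Matrix ι ι ℝ)
    (hM : ∀ i j, M i j = ∫ ω, g ω * Z ω i * Z ω j ∂P)
    (hint : ∀ i j, Integrable (fun ω => g ω * Z ω i * Z ω j) P) :
    M.PosSemidef := by
  rw [posSemidef_iff_dotProduct_mulVec]
  constructor
  · ext i j
    rw [conjTranspose_apply, hM, hM, star_trivial]
    congr 1; funext ω; ring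
  · intro x
    have key : star x ⬝ᵥ M *ᵥ x = ∫ ω, g ω * (∑ i, x i * Z ω i) ^ 2 ∂P := by
      have : star x ⬝ᵥ M *ᵥ x = ∑ i, ∑ j, ∫ ω, x i * x j * (g ω * Z ω i * Z ω j) ∂P := by
        simp only [star_trivial, dotProduct, mulVec, Finset.mul_sum]
        refine Finset.sum_congr rfl fun i _ => Finset.sum_congr rfl fun j _ => ?_
        rw [hM, integral_const_mul]
        ring
      rw [this]
      have hswap : ∑ i, ∑ j, ∫ ω, x i * x j * (g ω * Z ω i * Z ω j) ∂P
          = ∫ ω, ∑ i, ∑ j, x i * x j * (g ω * Z ω i * Z ω j) ∂P := by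
        calc ∑ i, ∑ j, ∫ ω, x i * x j * (g ω * Z ω i * Z ω j) ∂P
            = ∑ i, ∫ ω, ∑ j, x i * x j * (g ω * Z ω i * Z ω j) ∂P :=
              Finset.sum_congr rfl fun i _ =>
                (integral_finset_sum _ fun j _ => (hint i j).const_mul _).symm
          _ = ∫ ω, ∑ i, ∑ j, x i * x j * (g ω * Z ω i * Z ω j) ∂P :=
              (integral_finset_sum _ fun i _ =>
                integrable_finset_sum _ fun j _ => (hint i j).const_mul _).symm
      rw [hswap]
      refine integral_congr_ae (Filter.Eventually.of_forall fun ω => ?_)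
      simp only [sq, Finset.sum_mul_sum, Finset.mul_sum, Finset.sum_mul]
      refine Finset.sum_congr rfl fun i _ => ?_
      exact Finset.sum_congr rfl fun j _ => by ring
    rw [key]
    exact integral_nonneg fun ω => mul_nonneg (hg ω) (sq_nonneg _)

lemma aux_herm_dot {n : Type*} [Fintype n] {M : Matrix n n ℝ} (hM : M.IsHermitian)
    (x y : n → ℝ) : y ⬝ᵥ M *ᵥ x = x ⬝ᵥ M *ᵥ y := by
  have hij : ∀ i j, M j i = M i j := fun i j => by
    conv_lhs => rw [← hM]
    simp [conjTranspose_apply]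
  simp only [dotProduct, mulVec, Finset.mul_sum]
  rw [Finset.sum_comm]
  refine Finset.sum_congr rfl fun i _ => Finset.sum_congr rfl fun j _ => ?_
  rw [hij]; ring

/-- Cauchy–Schwarz for a positive semidefinite real matrix. -/
lemma aux_cs {n : Type*} [Fintype n] {M : Matrix n n ℝ} (hM : M.PosSemidef)
    (x y : n → ℝ) : (x ⬝ᵥ M *ᵥ y) ^ 2 ≤ (x ⬝ᵥ M *ᵥ x) * (y ⬝ᵥ M *ᵥ y) := by
  have hsym := aux_herm_dot hM.1 x y
  have key : ∀ t : ℝ, 0 ≤ (y ⬝ᵥ M *ᵥ y) * (t * t) + (2 * (x ⬝ᵥ M *ᵥ y)) * t +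
      (x ⬝ᵥ M *ᵥ x) := by
    intro t
    have h0 := hM.dotProduct_mulVec_nonneg (x + t • y)
    simp only [star_trivial, add_dotProduct, mulVec_add, mulVec_smul, dotProduct_add,
      dotProduct_smul, smul_dotProduct, smul_eq_mul] at h0
    rw [hsym] at h0
    ring_nf at h0 ⊢
    linarith [h0]
  have hd := discrim_le_zero key
  rw [discrim] at hd
  nlinarith [hd]

/-- Loewner-monotonicity of the inverse quadratic form. -/
lemma aux_inv_mono {n : Type*} [Fintype n] [DecidableEq n] {A B : Matrix n n ℝ}
    (hA : A.PosDef) (hB : B.PosDef) (hBA : (B - A).PosSemidef) (q : n → ℝ) :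
    q ⬝ᵥ B⁻¹ *ᵥ q ≤ q ⬝ᵥ A⁻¹ *ᵥ q := by
  haveI := hB.isUnit.invertible
  haveI := hA.isUnit.invertible
  set x := B⁻¹ *ᵥ q with hx
  have hBx : B *ᵥ x = q := by
    rw [hx, mulVec_mulVec, mul_nonsing_inv _ hB.det_pos.ne'.isUnit, one_mulVec]
  have hAy : A *ᵥ (A⁻¹ *ᵥ q) = q := by
    rw [mulVec_mulVec, mul_nonsing_inv _ hA.det_pos.ne'.isUnit, one_mulVec]
  set t := q ⬝ᵥ B⁻¹ *ᵥ q with ht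
  have htx : t = x ⬝ᵥ B *ᵥ x := by
    rw [hBx, ht, dotProduct_comm]
  have ht0 : 0 ≤ t := by
    rw [htx]
    have := hB.posSemidef.dotProduct_mulVec_nonneg x
    simpa using this
  have hxq : x ⬝ᵥ q = t := by rw [ht, dotProduct_comm]
  have hle : x ⬝ᵥ A *ᵥ x ≤ x ⬝ᵥ B *ᵥ x := by
    have := hBA.dotProduct_mulVec_nonneg x
    simp only [star_trivial, sub_mulVec, dotProduct_sub] at this
    linarith
  have hv0 : 0 ≤ q ⬝ᵥ A⁻¹ *ᵥ q := by
    have := hA.inv.posSemidef.dotProduct_mulVec_nonneg q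
    simpa using this
  have hcs := aux_cs hA.posSemidef x (A⁻¹ *ᵥ q)
  rw [mulVec_mulVec] at hcs
  have h1 : x ⬝ᵥ A *ᵥ (A⁻¹ *ᵥ q) = t := by rw [hAy, hxq]
  have h2 : (A⁻¹ *ᵥ q) ⬝ᵥ A *ᵥ (A⁻¹ *ᵥ q) = q ⬝ᵥ A⁻¹ *ᵥ q := by
    rw [hAy, dotProduct_comm]
  rw [← mulVec_mulVec, h1, h2] at hcs
  rcases ht0.eq_or_lt with h | h
  · rw [← h]; exact hv0
  · nlinarith [hcs, hle, htx, hv0]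

end Aux


/-- efficiency gain of the integrative estimator (deterministic core of
Theorem 5, uncensored case): `V_int − V_rct = E[(1−S)X₁X₁ᵀ] − B₁₂B₂₂⁻¹B₁₂ᵀ` is positive
semidefinite, `V_int` is positive definite, and `qᵀV_int⁻¹q ≤ qᵀV_rct⁻¹q` for every `q`. -/
theorem integrative_efficiency_gain {Ω : Type*} [MeasurableSpace Ω]
    (P : Measure Ω) [IsProbabilityMeasure P] {d₁ d₂ : ℕ}
    (S : Ω → ℝ) (hS : Measurable S) (hSval : ∀ ω, S ω = 0 ∨ S ω = 1)
    (X₁ : Ω → Fin d₁ → ℝ) (X₂ : Ω → Fin d₂ → ℝ)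
    (hX₁ : Measurable X₁) (hX₂ : Measurable X₂)
    (hX₁L2 : ∀ i, MemLp (fun ω => X₁ ω i) 2 P)
    (hX₂L2 : ∀ i, MemLp (fun ω => X₂ ω i) 2 P)
    (Vrct M₁₁ : Matrix (Fin d₁) (Fin d₁) ℝ)
    (B₁₂ : Matrix (Fin d₁) (Fin d₂) ℝ) (B₂₂ : Matrix (Fin d₂) (Fin d₂) ℝ)
    (hVrct : ∀ i j, Vrct i j = ∫ ω, S ω * X₁ ω i * X₁ ω j ∂P)
    (hM₁₁ : ∀ i j, M₁₁ i j = ∫ ω, X₁ ω i * X₁ ω j ∂P)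
    (hB₁₂ : ∀ i j, B₁₂ i j = ∫ ω, (1 - S ω) * X₁ ω i * X₂ ω j ∂P)
    (hB₂₂ : ∀ i j, B₂₂ i j = ∫ ω, (1 - S ω) * X₂ ω i * X₂ ω j ∂P)
    (hVrctPD : Vrct.PosDef) (hB₂₂PD : B₂₂.PosDef)
    (Vint : Matrix (Fin d₁) (Fin d₁) ℝ)
    (hVint : Vint = M₁₁ - B₁₂ * B₂₂⁻¹ * B₁₂ᵀ)
    (E1S : Matrix (Fin d₁) (Fin d₁) ℝ)
    (hE1S : ∀ i j, E1S i j = ∫ ω, (1 - S ω) * X₁ ω i * X₁ ω j ∂P) :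
    Vint - Vrct = E1S - B₁₂ * B₂₂⁻¹ * B₁₂ᵀ ∧
    (Vint - Vrct).PosSemidef ∧ Vint.PosDef ∧
    ∀ q : Fin d₁ → ℝ, q ⬝ᵥ Vint⁻¹.mulVec q ≤ q ⬝ᵥ Vrct⁻¹.mulVec q := by
  -- basic measurability and bounds
  have hmX₁ : ∀ i, Measurable fun ω => X₁ ω i := fun i => (measurable_pi_apply i).comp hX₁
  have hmX₂ : ∀ i, Measurable fun ω => X₂ ω i := fun i => (measurable_pi_apply i).comp hX₂
  have hSb : ∀ ω, |S ω| ≤ 1 := fun ω => by rcases hSval ω with h | h <;> rw [h] <;> norm_num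
  have h1Sb : ∀ ω, |1 - S ω| ≤ 1 := fun ω => by
    rcases hSval ω with h | h <;> rw [h] <;> norm_num
  have h1Snn : ∀ ω, (0:ℝ) ≤ 1 - S ω := fun ω => by
    rcases hSval ω with h | h <;> rw [h] <;> norm_num
  have hm1S : Measurable fun ω => 1 - S ω := measurable_const.sub hS
  -- the combined vector
  set Z : Ω → (Fin d₁ ⊕ Fin d₂) → ℝ := fun ω => Sum.elim (X₁ ω) (X₂ ω) with hZ
  have hmZ : ∀ i, Measurable fun ω => Z ω i := by
    rintro (i | i)
    · exact hmX₁ i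
    · exact hmX₂ i
  have hZL2 : ∀ i, MemLp (fun ω => Z ω i) 2 P := by
    rintro (i | i)
    · exact hX₁L2 i
    · exact hX₂L2 i
  have hintZ : ∀ i j, Integrable (fun ω => (1 - S ω) * Z ω i * Z ω j) P := fun i j =>
    aux_integrable _ hm1S h1Sb _ _ (hmZ i) (hmZ j) (hZL2 i) (hZL2 j)
  -- the big block matrix is PSD
  set M : Matrix (Fin d₁ ⊕ Fin d₂) (Fin d₁ ⊕ Fin d₂) ℝ :=
    fromBlocks E1S B₁₂ B₁₂ᵀ B₂₂ with hMdef
  have hMentry : ∀ i j, M i j = ∫ ω, (1 - S ω) * Z ω i * Z ω j ∂P := by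
    rintro (i | i) (j | j)
    · simpa [hMdef, fromBlocks, hZ] using hE1S i j
    · simpa [hMdef, fromBlocks, hZ] using hB₁₂ i j
    · rw [hMdef]
      show B₁₂ᵀ i j = _
      rw [transpose_apply, hB₁₂]
      refine integral_congr_ae (Filter.Eventually.of_forall fun ω => ?_)
      show (1 - S ω) * X₁ ω j * X₂ ω i = (1 - S ω) * X₂ ω i * X₁ ω j
      ring
    · simpa [hMdef, fromBlocks, hZ] using hB₂₂ i j
  have hMpsd : M.PosSemidef := aux_psd _ Z h1Snn M hMentry hintZ
  -- Schur complement is PSD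
  haveI : Invertible B₂₂ := hB₂₂PD.isUnit.invertible
  have hSchur : (E1S - B₁₂ * B₂₂⁻¹ * B₁₂ᵀ).PosSemidef := by
    have h := (PosDef.fromBlocks₂₂ E1S B₁₂ hB₂₂PD).mp ?_
    · rwa [conjTranspose_eq_transpose_of_trivial] at h
    · rwa [conjTranspose_eq_transpose_of_trivial]
  -- the decomposition M₁₁ = Vrct + E1S
  have hsplit : M₁₁ = Vrct + E1S := by
    ext i j
    rw [Matrix.add_apply, hM₁₁, hVrct, hE1S]
    rw [← integral_add (aux_integrable _ hS hSb _ _ (hmX₁ i) (hmX₁ j) (hX₁L2 i) (hX₁L2 j))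
      (aux_integrable _ hm1S h1Sb _ _ (hmX₁ i) (hmX₁ j) (hX₁L2 i) (hX₁L2 j))]
    refine integral_congr_ae (Filter.Eventually.of_forall fun ω => ?_)
    show X₁ ω i * X₁ ω j = S ω * X₁ ω i * X₁ ω j + (1 - S ω) * X₁ ω i * X₁ ω j
    ring
  have heq : Vint - Vrct = E1S - B₁₂ * B₂₂⁻¹ * B₁₂ᵀ := by
    rw [hVint, hsplit]; abel
  have hpsd : (Vint - Vrct).PosSemidef := heq ▸ hSchur
  have hVintPD : Vint.PosDef := by
    have : Vint = Vrct + (Vint - Vrct) := by abel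
    rw [this]
    exact hVrctPD.add_posSemidef hpsd
  refine ⟨heq, hpsd, hVintPD, fun q => ?_⟩
  exact aux_inv_mono hVrctPD hVintPD hpsd q
end

section
/- Equality condition for the efficiency comparison (Theorem 5): qᵀ·V_int⁻¹·q = qᵀ·V_rct⁻¹·q holds for every q ∈ ℝ^{d₁} if and only if there exists a constant d₂×d₁ real matrix Q such that (1−S)·X₁ = (1−S)·QᵀX₂ P-almost surely (i.e., X₁ = QᵀX₂ almost surely on the event {S = 0}). -/
open MeasureTheory Matrix

private lemma l2_mul_integrable {Ω : Type*} [MeasurableSpace Ω] {P : Measure Ω}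
    {f g : Ω → ℝ} (hf : MemLp f 2 P) (hg : MemLp g 2 P) :
    Integrable (fun ω => f ω * g ω) P := by
  have h := L2.integrable_inner (𝕜 := ℝ) (hf.toLp f) (hg.toLp g)
  refine h.congr ?_
  filter_upwards [hf.coeFn_toLp, hg.coeFn_toLp] with ω h1 h2
  simp [h1, h2, RCLike.inner_apply, mul_comm]

private lemma quadform_zero {n : ℕ} {A : Matrix (Fin n) (Fin n) ℝ} (hA : Aᵀ = A)
    (h : ∀ q : Fin n → ℝ, q ⬝ᵥ A.mulVec q = 0) : A = 0 := by
  have hd : ∀ i, A i i = 0 := by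
    intro i
    have := h (Pi.single i 1)
    simpa using this
  ext i j
  have h2 := h (Pi.single i 1 + Pi.single j 1)
  have hsym : A j i = A i j := congrFun (congrFun hA i) j
  simp [Matrix.mulVec_add, dotProduct_add, add_dotProduct, hd, hsym] at h2
  simpa using h2

/-- equality condition for the efficiency comparison in Theorem 5:
`qᵀV_int⁻¹q = qᵀV_rct⁻¹q` for every `q` iff there is a constant matrix `Q` with
`(1−S)·X₁ = (1−S)·QᵀX₂` P-almost surely. -/
theorem integrative_efficiency_equality_condition {Ω : Type*} [MeasurableSpace Ω]
    (P : Measure Ω) [IsProbabilityMeasure P] {d₁ d₂ : ℕ}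
    (S : Ω → ℝ) (hS : Measurable S) (hSval : ∀ ω, S ω = 0 ∨ S ω = 1)
    (X₁ : Ω → Fin d₁ → ℝ) (X₂ : Ω → Fin d₂ → ℝ)
    (hX₁ : Measurable X₁) (hX₂ : Measurable X₂)
    (hX₁L2 : ∀ i, MemLp (fun ω => X₁ ω i) 2 P)
    (hX₂L2 : ∀ i, MemLp (fun ω => X₂ ω i) 2 P)
    (Vrct M₁₁ : Matrix (Fin d₁) (Fin d₁) ℝ)
    (B₁₂ : Matrix (Fin d₁) (Fin d₂) ℝ) (B₂₂ : Matrix (Fin d₂) (Fin d₂) ℝ)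
    (hVrct : ∀ i j, Vrct i j = ∫ ω, S ω * X₁ ω i * X₁ ω j ∂P)
    (hM₁₁ : ∀ i j, M₁₁ i j = ∫ ω, X₁ ω i * X₁ ω j ∂P)
    (hB₁₂ : ∀ i j, B₁₂ i j = ∫ ω, (1 - S ω) * X₁ ω i * X₂ ω j ∂P)
    (hB₂₂ : ∀ i j, B₂₂ i j = ∫ ω, (1 - S ω) * X₂ ω i * X₂ ω j ∂P)
    (hVrctPD : Vrct.PosDef) (hB₂₂PD : B₂₂.PosDef)
    (Vint : Matrix (Fin d₁) (Fin d₁) ℝ)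
    (hVint : Vint = M₁₁ - B₁₂ * B₂₂⁻¹ * B₁₂ᵀ)
     :
    (∀ q : Fin d₁ → ℝ, q ⬝ᵥ Vint⁻¹.mulVec q = q ⬝ᵥ Vrct⁻¹.mulVec q) ↔
      ∃ Q : Matrix (Fin d₂) (Fin d₁) ℝ,
        ∀ᵐ ω ∂P, ∀ i, (1 - S ω) * X₁ ω i = (1 - S ω) * ∑ k, Q k i * X₂ ω k := by
  -- basic facts about the indicator c = 1 - S
  have hc01 : ∀ ω, (1 - S ω) = 0 ∨ (1 - S ω) = 1 := by
    intro ω; rcases hSval ω with h | h <;> simp [h]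
  have hcbd : ∀ ω, ‖(1 - S ω)‖ ≤ 1 := by
    intro ω; rcases hc01 ω with h | h <;> simp [h]
  have hcm : Measurable (fun ω => 1 - S ω) := measurable_const.sub hS
  -- integrability facts
  have hInt11 : ∀ i j, Integrable (fun ω => (1 - S ω) * (X₁ ω i * X₁ ω j)) P := fun i j =>
    (l2_mul_integrable (hX₁L2 i) (hX₁L2 j)).bdd_mul hcm.aestronglyMeasurable (Filter.Eventually.of_forall hcbd)
  have hInt12 : ∀ i j, Integrable (fun ω => (1 - S ω) * (X₁ ω i * X₂ ω j)) P := fun i j =>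
    (l2_mul_integrable (hX₁L2 i) (hX₂L2 j)).bdd_mul hcm.aestronglyMeasurable (Filter.Eventually.of_forall hcbd)
  have hInt22 : ∀ i j, Integrable (fun ω => (1 - S ω) * (X₂ ω i * X₂ ω j)) P := fun i j =>
    (l2_mul_integrable (hX₂L2 i) (hX₂L2 j)).bdd_mul hcm.aestronglyMeasurable (Filter.Eventually.of_forall hcbd)
  have hIntM : ∀ i j, Integrable (fun ω => X₁ ω i * X₁ ω j) P := fun i j =>
    l2_mul_integrable (hX₁L2 i) (hX₁L2 j)
  -- rewritten hypotheses
  have hB₁₂' : ∀ i j, B₁₂ i j = ∫ ω, (1 - S ω) * (X₁ ω i * X₂ ω j) ∂P := by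
    intro i j; rw [hB₁₂]; simp_rw [mul_assoc]
  have hB₂₂' : ∀ i j, B₂₂ i j = ∫ ω, (1 - S ω) * (X₂ ω i * X₂ ω j) ∂P := by
    intro i j; rw [hB₂₂]; simp_rw [mul_assoc]
  -- the matrix B₁₁
  set B₁₁ : Matrix (Fin d₁) (Fin d₁) ℝ :=
    Matrix.of fun i j => ∫ ω, (1 - S ω) * (X₁ ω i * X₁ ω j) ∂P with hB₁₁def
  have hB₁₁ : ∀ i j, B₁₁ i j = ∫ ω, (1 - S ω) * (X₁ ω i * X₁ ω j) ∂P := fun i j => rfl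
  -- M₁₁ = Vrct + B₁₁
  have hMV : M₁₁ = Vrct + B₁₁ := by
    ext i j
    have hps : (fun ω => X₁ ω i * X₁ ω j) =
        fun ω => S ω * X₁ ω i * X₁ ω j + (1 - S ω) * (X₁ ω i * X₁ ω j) := by
      funext ω; ring
    have hiS : Integrable (fun ω => S ω * X₁ ω i * X₁ ω j) P := by
      refine ((hIntM i j).bdd_mul (c := 1) hS.aestronglyMeasurable (Filter.Eventually.of_forall fun ω => ?_)).congr ?_
      · rcases hSval ω with h | h <;> simp [h]
      · exact Filter.Eventually.of_forall fun ω => by ring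
    rw [Matrix.add_apply, hM₁₁, hVrct, hB₁₁, hps, integral_add hiS (hInt11 i j)]
  -- general expansion lemmas
  have E1 : ∀ (Q : Matrix (Fin d₂) (Fin d₁) ℝ) i j,
      (∫ ω, (1 - S ω) * (X₁ ω i * ∑ k, Q k j * X₂ ω k) ∂P) = (B₁₂ * Q) i j ∧
      Integrable (fun ω => (1 - S ω) * (X₁ ω i * ∑ k, Q k j * X₂ ω k)) P := by
    intro Q i j
    have hfe : (fun ω => (1 - S ω) * (X₁ ω i * ∑ k, Q k j * X₂ ω k)) =
        fun ω => ∑ k, Q k j * ((1 - S ω) * (X₁ ω i * X₂ ω k)) := by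
      funext ω
      rw [Finset.mul_sum, Finset.mul_sum]
      exact Finset.sum_congr rfl fun k _ => by ring
    constructor
    · rw [hfe, integral_finset_sum _ fun k _ => (hInt12 i k).const_mul _]
      simp_rw [integral_const_mul]
      rw [Matrix.mul_apply]
      exact Finset.sum_congr rfl fun k _ => by rw [hB₁₂']; ring
    · rw [hfe]
      exact integrable_finset_sum _ fun k _ => (hInt12 i k).const_mul _
  have E3 : ∀ (Q : Matrix (Fin d₂) (Fin d₁) ℝ) i j,
      (∫ ω, (1 - S ω) * ((∑ k, Q k i * X₂ ω k) * X₂ ω j) ∂P) = (Qᵀ * B₂₂) i j := by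
    intro Q i j
    have hfe : (fun ω => (1 - S ω) * ((∑ k, Q k i * X₂ ω k) * X₂ ω j)) =
        fun ω => ∑ k, Q k i * ((1 - S ω) * (X₂ ω k * X₂ ω j)) := by
      funext ω
      rw [Finset.sum_mul, Finset.mul_sum]
      exact Finset.sum_congr rfl fun k _ => by ring
    rw [hfe, integral_finset_sum _ fun k _ => (hInt22 k j).const_mul _]
    simp_rw [integral_const_mul]
    rw [Matrix.mul_apply]
    exact Finset.sum_congr rfl fun k _ => by rw [hB₂₂', Matrix.transpose_apply]
  have ED : ∀ (Q : Matrix (Fin d₂) (Fin d₁) ℝ) i j,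
      (∫ ω, (1 - S ω) * ((∑ k, Q k i * X₂ ω k) * ∑ l, Q l j * X₂ ω l) ∂P)
        = (Qᵀ * B₂₂ * Q) i j ∧
      Integrable (fun ω => (1 - S ω) * ((∑ k, Q k i * X₂ ω k) * ∑ l, Q l j * X₂ ω l)) P := by
    intro Q i j
    have hfe : (fun ω => (1 - S ω) * ((∑ k, Q k i * X₂ ω k) * ∑ l, Q l j * X₂ ω l)) =
        fun ω => ∑ k, ∑ l, (Q k i * Q l j) * ((1 - S ω) * (X₂ ω k * X₂ ω l)) := by
      funext ω
      rw [Finset.sum_mul_sum, Finset.mul_sum]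
      refine Finset.sum_congr rfl fun k _ => ?_
      rw [Finset.mul_sum]
      exact Finset.sum_congr rfl fun l _ => by ring
    constructor
    · rw [hfe, integral_finset_sum _ fun k _ =>
        integrable_finset_sum _ fun l _ => (hInt22 k l).const_mul _]
      have : ∀ k, (∫ ω, ∑ l, (Q k i * Q l j) * ((1 - S ω) * (X₂ ω k * X₂ ω l)) ∂P)
          = ∑ l, (Q k i * Q l j) * B₂₂ k l := by
        intro k
        rw [integral_finset_sum _ fun l _ => (hInt22 k l).const_mul _]
        simp_rw [integral_const_mul]
        exact Finset.sum_congr rfl fun l _ => by rw [hB₂₂']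
      simp_rw [this]
      rw [Matrix.mul_apply]
      simp_rw [Matrix.mul_apply, Matrix.transpose_apply, Finset.sum_mul]
      rw [Finset.sum_comm]
      exact Finset.sum_congr rfl fun k _ => Finset.sum_congr rfl fun l _ => by ring
    · rw [hfe]
      exact integrable_finset_sum _ fun k _ =>
        integrable_finset_sum _ fun l _ => (hInt22 k l).const_mul _
  -- symmetry facts
  have hB₂₂sym : B₂₂ᵀ = B₂₂ := by
    ext i j
    rw [Matrix.transpose_apply, hB₂₂', hB₂₂']
    exact integral_congr_ae (Filter.Eventually.of_forall fun ω => by ring)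
  have hB₂₂det : IsUnit B₂₂.det := isUnit_iff_ne_zero.2 hB₂₂PD.det_pos.ne'
  have hVrctdet : IsUnit Vrct.det := isUnit_iff_ne_zero.2 hVrctPD.det_pos.ne'
  have hB₂₂invsym : (B₂₂⁻¹)ᵀ = B₂₂⁻¹ := by
    rw [Matrix.transpose_nonsing_inv, hB₂₂sym]
  constructor
  · -- forward direction
    intro hq
    rcases Nat.eq_zero_or_pos d₁ with hd0 | hd0
    · exact ⟨0, Filter.Eventually.of_forall fun ω i => absurd i.pos (by omega)⟩
    haveI : Nonempty (Fin d₁) := Fin.pos_iff_nonempty.mp hd0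
    -- symmetry of Vint and Vrct
    have hVrctsym : Vrctᵀ = Vrct := by
      ext i j
      rw [Matrix.transpose_apply, hVrct, hVrct]
      exact integral_congr_ae (Filter.Eventually.of_forall fun ω => by ring)
    have hM₁₁sym : M₁₁ᵀ = M₁₁ := by
      ext i j
      rw [Matrix.transpose_apply, hM₁₁, hM₁₁]
      exact integral_congr_ae (Filter.Eventually.of_forall fun ω => by ring)
    have hVintsym : Vintᵀ = Vint := by
      have hCt : (B₁₂ * B₂₂⁻¹ * B₁₂ᵀ)ᵀ = B₁₂ * B₂₂⁻¹ * B₁₂ᵀ := by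
        rw [Matrix.transpose_mul, Matrix.transpose_mul, Matrix.transpose_transpose,
          hB₂₂invsym, ← Matrix.mul_assoc]
      rw [hVint, Matrix.transpose_sub, hM₁₁sym, hCt]
    -- equal quadratic forms give equal inverses
    have hinv : Vint⁻¹ = Vrct⁻¹ := by
      have h0 : Vint⁻¹ - Vrct⁻¹ = 0 := by
        apply quadform_zero
        · rw [Matrix.transpose_sub, Matrix.transpose_nonsing_inv, Matrix.transpose_nonsing_inv,
            hVintsym, hVrctsym]
        · intro q
          rw [Matrix.sub_mulVec, dotProduct_sub, hq q, sub_self]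
      exact sub_eq_zero.mp h0
    -- Vint is invertible
    have hVintdet : IsUnit Vint.det := by
      by_contra hnot
      rw [Matrix.nonsing_inv_apply_not_isUnit _ hnot] at hinv
      have h1 : Vrct * Vrct⁻¹ = 1 := Matrix.mul_nonsing_inv _ hVrctdet
      rw [← hinv, Matrix.mul_zero] at h1
      exact one_ne_zero h1.symm
    have hVV : Vint = Vrct := by
      have := congrArg (fun M => M⁻¹) hinv
      simpa [Matrix.nonsing_inv_nonsing_inv _ hVintdet,
        Matrix.nonsing_inv_nonsing_inv _ hVrctdet] using this
    -- hence B₁₁ equals the Schur term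
    have hB11C : B₁₁ = B₁₂ * B₂₂⁻¹ * B₁₂ᵀ := by
      have h1 : M₁₁ - B₁₂ * B₂₂⁻¹ * B₁₂ᵀ = Vrct := by rw [← hVint, hVV]
      rw [hMV] at h1
      have h2 : Vrct + B₁₁ = Vrct + B₁₂ * B₂₂⁻¹ * B₁₂ᵀ := sub_eq_iff_eq_add.mp h1
      exact add_left_cancel h2
    -- the optimal coefficient matrix
    set Q : Matrix (Fin d₂) (Fin d₁) ℝ := B₂₂⁻¹ * B₁₂ᵀ with hQdef
    have hQT : Qᵀ = B₁₂ * B₂₂⁻¹ := by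
      rw [hQdef, Matrix.transpose_mul, Matrix.transpose_transpose, hB₂₂invsym]
    have hBQ : B₁₂ * Q = B₁₂ * B₂₂⁻¹ * B₁₂ᵀ := by
      rw [hQdef, ← Matrix.mul_assoc]
    have hQBQ : Qᵀ * B₂₂ * Q = B₁₂ * B₂₂⁻¹ * B₁₂ᵀ := by
      rw [hQT, Matrix.mul_assoc B₁₂ B₂₂⁻¹ B₂₂, Matrix.nonsing_inv_mul _ hB₂₂det,
        Matrix.mul_one, Matrix.mul_assoc, ← hQdef, hBQ]
    refine ⟨Q, ?_⟩
    rw [ae_all_iff]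
    intro i
    -- the squared residual has zero integral
    have hexp : (fun ω => (1 - S ω) *
        ((X₁ ω i - ∑ k, Q k i * X₂ ω k) * (X₁ ω i - ∑ k, Q k i * X₂ ω k))) =
        fun ω => (1 - S ω) * (X₁ ω i * X₁ ω i)
          - (2 : ℝ) * ((1 - S ω) * (X₁ ω i * ∑ k, Q k i * X₂ ω k))
          + (1 - S ω) * ((∑ k, Q k i * X₂ ω k) * ∑ l, Q l i * X₂ ω l) := by
      funext ω; ring
    have hint2 := (E1 Q i i).2
    have hint3 := (ED Q i i).2
    have hintR : Integrable (fun ω => (1 - S ω) *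
        ((X₁ ω i - ∑ k, Q k i * X₂ ω k) * (X₁ ω i - ∑ k, Q k i * X₂ ω k))) P := by
      rw [hexp]
      exact ((hInt11 i i).sub (hint2.const_mul 2)).add hint3
    have hzero : (∫ ω, (1 - S ω) *
        ((X₁ ω i - ∑ k, Q k i * X₂ ω k) * (X₁ ω i - ∑ k, Q k i * X₂ ω k)) ∂P) = 0 := by
      have hfsub : Integrable (fun ω => (1 - S ω) * (X₁ ω i * X₁ ω i)
          - (2 : ℝ) * ((1 - S ω) * (X₁ ω i * ∑ k, Q k i * X₂ ω k))) P :=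
        (hInt11 i i).sub (hint2.const_mul 2)
      rw [hexp, integral_add hfsub hint3,
        integral_sub (hInt11 i i) (hint2.const_mul 2), integral_const_mul,
        (E1 Q i i).1, (ED Q i i).1, ← hB₁₁, hBQ, hQBQ]
      have h11 : B₁₁ i i = (B₁₂ * B₂₂⁻¹ * B₁₂ᵀ) i i := by rw [hB11C]
      rw [h11]; ring
    have hae0 := (integral_eq_zero_iff_of_nonneg_ae
      (Filter.Eventually.of_forall fun ω => by
        rcases hc01 ω with h | h
        · simp [h]
        · rw [h, one_mul]; exact mul_self_nonneg _) hintR).mp hzero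
    filter_upwards [hae0] with ω hω
    rcases hc01 ω with h | h
    · rw [h, zero_mul, zero_mul]
    · rw [h, one_mul] at hω ⊢
      simp only [Pi.zero_apply] at hω
      have := mul_self_eq_zero.mp hω
      linarith [sub_eq_zero.mp this]
  · -- converse direction
    rintro ⟨Q, hQ⟩ q
    -- pointwise a.e. consequences
    have hcc : ∀ ω, (1 - S ω) * (1 - S ω) = (1 - S ω) := by
      intro ω; rcases hc01 ω with h | h <;> rw [h] <;> ring
    have hB11Q : B₁₁ = Qᵀ * B₂₂ * Q := by
      ext i j
      rw [hB₁₁, ← (ED Q i j).1]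
      refine integral_congr_ae ?_
      filter_upwards [hQ] with ω hω
      have h1 := hω i
      have h2 := hω j
      calc (1 - S ω) * (X₁ ω i * X₁ ω j)
          = ((1 - S ω) * X₁ ω i) * ((1 - S ω) * X₁ ω j) := by
            conv_lhs => rw [← hcc ω]
            ring
        _ = ((1 - S ω) * ∑ k, Q k i * X₂ ω k) * ((1 - S ω) * ∑ k, Q k j * X₂ ω k) := by
            rw [h1, h2]
        _ = (1 - S ω) * ((∑ k, Q k i * X₂ ω k) * ∑ l, Q l j * X₂ ω l) := by
            conv_rhs => rw [← hcc ω]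
            ring
    have hB12Q : B₁₂ = Qᵀ * B₂₂ := by
      ext i j
      rw [hB₁₂', ← E3 Q i j]
      refine integral_congr_ae ?_
      filter_upwards [hQ] with ω hω
      have h1 := hω i
      calc (1 - S ω) * (X₁ ω i * X₂ ω j)
          = ((1 - S ω) * X₁ ω i) * X₂ ω j := by ring
        _ = ((1 - S ω) * ∑ k, Q k i * X₂ ω k) * X₂ ω j := by rw [h1]
        _ = (1 - S ω) * ((∑ k, Q k i * X₂ ω k) * X₂ ω j) := by ring
    have hC : B₁₂ * B₂₂⁻¹ * B₁₂ᵀ = B₁₁ := by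
      rw [hB12Q, hB11Q, Matrix.transpose_mul, hB₂₂sym, Matrix.transpose_transpose,
        Matrix.mul_assoc (Qᵀ * B₂₂) B₂₂⁻¹ (B₂₂ * Q), ← Matrix.mul_assoc B₂₂⁻¹ B₂₂ Q,
        Matrix.nonsing_inv_mul _ hB₂₂det, Matrix.one_mul]
    have hVV : Vint = Vrct := by
      rw [hVint, hC, hMV, add_sub_cancel_right]
    rw [hVV]
end
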